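/- arXiv:2502.15628 — 3 statements merged into one kernel-verified Lean document; each statement's English description precedes it below -/
import Mathlib

section
/- Let Z and Z' be defined as double series Z = ∑_{n≥0} (z̊^n/n!) ∑_{m≥0} (ż^m/m!) I(n,m) and Z' = ∑_{n≥0} (z̊^n/n!) ∑_{m≥0} (ż^m/m!) I'(n,m) with 0 ≤ I(n,m) ≤ I'(n,m) for all n, m and all quantities finite. If moreover I'(n,m) − I(n,m) ≤ n·c₁·I'(n−1,m) + m·c₂·I'(n,m−1) for constants c₁, c₂ ≥ 0 (with the convention I'(−1,m) = I'(n,−1) = 0), then Z' − Z ≤ Z'·(z̊ c₁ + ż c₂). -/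
/-!
Multiply the recursion bound by the nonnegative weight `z̊ⁿ/n! · żᵐ/m!` and sum. Since
`(n+1) · z̊ⁿ⁺¹/(n+1)! = z̊ · z̊ⁿ/n!`, the term `n c₁ I'(n-1,m)` sums, after shifting `n` by one,
to `z̊ c₁ Z'`, and likewise the `m`-term sums to `ż c₂ Z'`.
-/

noncomputable def poissonWeight {K : Type*} [DivisionRing K] (z : K) (n : ℕ) : K :=
  z ^ n / n.factorial

lemma poissonWeight_nonneg {z : ℝ} (hz : 0 ≤ z) (n : ℕ) : 0 ≤ poissonWeight z n := by
  unfold poissonWeight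
  positivity

lemma succ_mul_poissonWeight_succ {K : Type*} [Field K] [CharZero K] (z : K) (n : ℕ) :
    ((n + 1 : ℕ) : K) * poissonWeight z (n + 1) = z * poissonWeight z n := by
  unfold poissonWeight
  have hfac : (n.factorial : K) ≠ 0 := by exact_mod_cast n.factorial_ne_zero
  have hsucc : ((n + 1 : ℕ) : K) ≠ 0 := by exact_mod_cast n.succ_ne_zero
  rw [Nat.factorial_succ, Nat.cast_mul]
  field_simp
  ring

section Shift

variable {β M : Type*} [AddCommMonoid M] [TopologicalSpace M] {f : ℕ × β → M} {a : M}

lemma HasSum.of_comp_succ_fst (h0 : ∀ b, f (0, b) = 0)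
    (h : HasSum (fun p : ℕ × β => f (p.1 + 1, p.2)) a) : HasSum f a := by
  have hinj : Function.Injective (Prod.map Nat.succ id : ℕ × β → ℕ × β) :=
    Nat.succ_injective.prodMap Function.injective_id
  refine (hinj.hasSum_iff fun p hp => ?_).mp h
  obtain ⟨n, b⟩ := p
  cases n with
  | zero => exact h0 b
  | succ n => exact absurd ⟨(n, b), rfl⟩ hp

lemma HasSum.of_comp_succ_snd {f : β × ℕ → M} (h0 : ∀ b, f (b, 0) = 0)
    (h : HasSum (fun p : β × ℕ => f (p.1, p.2 + 1)) a) : HasSum f a := by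
  rw [← (Equiv.prodComm ℕ β).hasSum_iff] at h ⊢
  exact h.of_comp_succ_fst h0

end Shift

section PoissonShift

variable {K : Type*} [Field K] [CharZero K] [TopologicalSpace K] [IsTopologicalRing K]
  {z zp S : K} {F : ℕ → ℕ → K}

lemma HasSum.poissonWeight_shift_fst (c : K)
    (h : HasSum (fun p : ℕ × ℕ => poissonWeight z p.1 * poissonWeight zp p.2 * F p.1 p.2) S) :
    HasSum (fun p : ℕ × ℕ => poissonWeight z p.1 * poissonWeight zp p.2 *
      ((p.1 : K) * c * F (p.1 - 1) p.2)) (z * c * S) := by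
  refine HasSum.of_comp_succ_fst (fun m => by simp) ?_
  refine (h.mul_left (z * c)).congr_fun fun p => ?_
  dsimp only
  rw [Nat.add_sub_cancel]
  linear_combination (c * poissonWeight zp p.2 * F p.1 p.2) * succ_mul_poissonWeight_succ z p.1

lemma HasSum.poissonWeight_shift_snd (c : K)
    (h : HasSum (fun p : ℕ × ℕ => poissonWeight z p.1 * poissonWeight zp p.2 * F p.1 p.2) S) :
    HasSum (fun p : ℕ × ℕ => poissonWeight z p.1 * poissonWeight zp p.2 *
      ((p.2 : K) * c * F p.1 (p.2 - 1))) (zp * c * S) := by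
  refine HasSum.of_comp_succ_snd (fun n => by simp) ?_
  refine (h.mul_left (zp * c)).congr_fun fun p => ?_
  dsimp only
  rw [Nat.add_sub_cancel]
  linear_combination (c * poissonWeight z p.1 * F p.1 p.2) * succ_mul_poissonWeight_succ zp p.2

end PoissonShift

theorem stmt12_general (z zp c₁ c₂ : ℝ) (hz : 0 < z) (hzp : 0 < zp)
    (I I' : ℕ → ℕ → ℝ)
    (hrec : ∀ n m, I' n m - I n m ≤
      (n : ℝ) * c₁ * I' (n - 1) m + (m : ℝ) * c₂ * I' n (m - 1))
    (hsum' : Summable (fun p : ℕ × ℕ =>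
      z ^ p.1 / p.1.factorial * (zp ^ p.2 / p.2.factorial) * I' p.1 p.2))
    (hsum : Summable (fun p : ℕ × ℕ =>
      z ^ p.1 / p.1.factorial * (zp ^ p.2 / p.2.factorial) * I p.1 p.2)) :
    (∑' p : ℕ × ℕ, z ^ p.1 / p.1.factorial * (zp ^ p.2 / p.2.factorial) * I' p.1 p.2) -
      (∑' p : ℕ × ℕ, z ^ p.1 / p.1.factorial * (zp ^ p.2 / p.2.factorial) * I p.1 p.2) ≤
    (∑' p : ℕ × ℕ, z ^ p.1 / p.1.factorial * (zp ^ p.2 / p.2.factorial) * I' p.1 p.2) *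
      (z * c₁ + zp * c₂) := by
  change (∑' p : ℕ × ℕ, poissonWeight z p.1 * poissonWeight zp p.2 * I' p.1 p.2) -
      (∑' p : ℕ × ℕ, poissonWeight z p.1 * poissonWeight zp p.2 * I p.1 p.2) ≤
    (∑' p : ℕ × ℕ, poissonWeight z p.1 * poissonWeight zp p.2 * I' p.1 p.2) *
      (z * c₁ + zp * c₂)
  change Summable fun p : ℕ × ℕ => poissonWeight z p.1 * poissonWeight zp p.2 * I' p.1 p.2
    at hsum'
  change Summable fun p : ℕ × ℕ => poissonWeight z p.1 * poissonWeight zp p.2 * I p.1 p.2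
    at hsum
  have hZ' := hsum'.hasSum
  have hbound := (hZ'.poissonWeight_shift_fst c₁).add (hZ'.poissonWeight_shift_snd c₂)
  refine (hasSum_le (fun p => ?_) (hZ'.sub hsum.hasSum) hbound).trans_eq (by ring)
  have hw := mul_nonneg (poissonWeight_nonneg hz.le p.1) (poissonWeight_nonneg hzp.le p.2)
  rw [← mul_sub, ← mul_add]
  exact mul_le_mul_of_nonneg_left (hrec p.1 p.2) hw

/-- Comparison of two Poissonian double series: if `0 ≤ I ≤ I'` and
`I'(n,m) − I(n,m) ≤ n c₁ I'(n−1,m) + m c₂ I'(n,m−1)`, then `Z' − Z ≤ Z'(z̊c₁ + zpc₂)`. -/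
theorem stmt12 (z zp c₁ c₂ : ℝ) (hz : 0 < z) (hzp : 0 < zp) (hc₁ : 0 ≤ c₁) (hc₂ : 0 ≤ c₂)
    (I I' : ℕ → ℕ → ℝ) (hI0 : ∀ n m, 0 ≤ I n m) (hII' : ∀ n m, I n m ≤ I' n m)
    (hrec : ∀ n m, I' n m - I n m ≤
      (n : ℝ) * c₁ * I' (n - 1) m + (m : ℝ) * c₂ * I' n (m - 1))
    (hsum' : Summable (fun p : ℕ × ℕ =>
      z ^ p.1 / p.1.factorial * (zp ^ p.2 / p.2.factorial) * I' p.1 p.2))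
    (hsum : Summable (fun p : ℕ × ℕ =>
      z ^ p.1 / p.1.factorial * (zp ^ p.2 / p.2.factorial) * I p.1 p.2)) :
    (∑' p : ℕ × ℕ, z ^ p.1 / p.1.factorial * (zp ^ p.2 / p.2.factorial) * I' p.1 p.2) -
      (∑' p : ℕ × ℕ, z ^ p.1 / p.1.factorial * (zp ^ p.2 / p.2.factorial) * I p.1 p.2) ≤
    (∑' p : ℕ × ℕ, z ^ p.1 / p.1.factorial * (zp ^ p.2 / p.2.factorial) * I' p.1 p.2) *
      (z * c₁ + zp * c₂) :=
  stmt12_general z zp c₁ c₂ hz hzp I I' hrec hsum' hsum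
end

section
/- Let ψ : ℝ → ℝ be smooth, non-increasing, with ψ(t) = 1 for t ≤ 0 and ψ(t) = 0 for t ≥ 1, and let φ : ℝ → ℝ be smooth, non-decreasing, with φ(t) = 0 for t ≤ 0 and φ(t) = t + C for t ≥ 1. Then for each R ≥ 1, the function x ↦ 2 log R + φ(R^{d+1}(|x| − R)) is C² on ℝ^d \ {0}, is constant (equal to 2 log R) on B(0, R), and ∑_{R=1}^∞ ∫_{ℝ^d \ B(0,R)} exp(−2 log R − φ(R^{d+1}(|x| − R))) dx < ∞. -/
open MeasureTheory Metric Set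

theorem philow (C : ℝ) (φ : ℝ → ℝ) (hφmono : Monotone φ)
    (hφ0 : ∀ t ≤ (0 : ℝ), φ t = 0) (hφ1 : ∀ t ≥ (1 : ℝ), φ t = t + C)
    (t : ℝ) : t + min C (-1) ≤ φ t := by
  rcases le_or_gt t 1 with h | h
  · have h0 : 0 ≤ φ t := by
      rcases le_or_gt t 0 with h' | h'
      · rw [hφ0 t h']
      · rw [← hφ0 0 le_rfl]; exact hφmono h'.le
    have : min C (-1) ≤ -1 := min_le_right _ _
    linarith
  · rw [hφ1 t h.le]
    have : min C (-1) ≤ C := min_le_left _ _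
    linarith

theorem oneDbound (d : ℕ) (hd : 2 ≤ d) (C : ℝ) (φ : ℝ → ℝ) (hφmono : Monotone φ)
    (hφ0 : ∀ t ≤ (0 : ℝ), φ t = 0) (hφ1 : ∀ t ≥ (1 : ℝ), φ t = t + C)
    (S : ℝ) (hS : 2 ≤ S) :
    ∫ y in Ioi S, y ^ (d - 1) * Real.exp (-(2 * Real.log S + φ (S ^ (d + 1) * (y - S)))) ≤
      2 * Real.exp (-(min C (-1))) / S ^ 4 := by
  have hS0 : (0:ℝ) < S := by linarith
  set A := Real.exp (-(min C (-1))) with hA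
  have hA0 : 0 < A := Real.exp_pos _
  set b := S ^ (d + 1) / 2 with hb
  have hb0 : 0 < b := by positivity
  set c := A * S ^ (d - 1) / S ^ 2 * Real.exp (b * S) with hc
  set g : ℝ → ℝ := fun y => c * Real.exp (-(b * y)) with hg
  have hgint : IntegrableOn g (Ioi S) := by
    have := (exp_neg_integrableOn_Ioi S hb0).const_mul c
    simpa [hg, neg_mul, IntegrableOn] using this
  have hexplog : Real.exp (-(2 * Real.log S)) = 1 / S ^ 2 := by
    rw [show (2:ℝ) * Real.log S = Real.log (S ^ 2) by rw [Real.log_pow]; norm_num,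
      ← Real.log_inv, Real.exp_log (by positivity), one_div]
  have h2d : (d:ℝ) + 1 ≤ 2 ^ d := by exact_mod_cast Nat.lt_two_pow_self (n := d)
  have hSd : (2:ℝ) ^ (d + 1) ≤ S ^ (d + 1) := pow_le_pow_left₀ (by norm_num) hS _
  have hnb : ((d - 1 : ℕ) : ℝ) ≤ b := by
    have h1 : ((d - 1 : ℕ) : ℝ) ≤ (d : ℝ) := by exact_mod_cast Nat.sub_le d 1
    have h2 : (2:ℝ) ^ (d + 1) = 2 * 2 ^ d := by ring
    rw [hb]; nlinarith
  have hmono : ∫ y in Ioi S, y ^ (d - 1) *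
      Real.exp (-(2 * Real.log S + φ (S ^ (d + 1) * (y - S)))) ≤ ∫ y in Ioi S, g y := by
    refine integral_mono_of_nonneg ?_ hgint ?_
    · filter_upwards [ae_restrict_mem measurableSet_Ioi] with y hy
      have : (0:ℝ) < y := lt_trans hS0 hy
      positivity
    · filter_upwards [ae_restrict_mem measurableSet_Ioi] with y hy
      have hy0 : (0:ℝ) < y := lt_trans hS0 hy
      have hu : 0 ≤ y - S := by simpa using (le_of_lt hy)
      set u := y - S with hu'
      set t := S ^ (d + 1) * u with ht
      have ht0 : 0 ≤ t := by positivity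
      have hF : Real.exp (-(2 * Real.log S + φ t)) = 1 / S ^ 2 * Real.exp (-(φ t)) := by
        rw [neg_add, Real.exp_add, hexplog]
      have hφb : Real.exp (-(φ t)) ≤ A * Real.exp (-t) := by
        rw [hA, ← Real.exp_add]
        exact Real.exp_le_exp.mpr (by
          have := philow C φ hφmono hφ0 hφ1 t; linarith)
      have hyp : y ^ (d - 1) ≤ S ^ (d - 1) * Real.exp (((d - 1 : ℕ) : ℝ) * u) := by
        calc y ^ (d - 1) ≤ (S * (1 + u)) ^ (d - 1) :=
              pow_le_pow_left₀ (by linarith) (by nlinarith) _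
          _ = S ^ (d - 1) * (1 + u) ^ (d - 1) := mul_pow _ _ _
          _ ≤ S ^ (d - 1) * Real.exp u ^ (d - 1) := by
              gcongr
              linarith [Real.add_one_le_exp u]
          _ = S ^ (d - 1) * Real.exp (((d - 1 : ℕ) : ℝ) * u) := by
              rw [← Real.exp_nat_mul]
      have hyd : (0:ℝ) ≤ y ^ (d - 1) := by positivity
      calc y ^ (d - 1) * Real.exp (-(2 * Real.log S + φ t))
          ≤ (S ^ (d - 1) * Real.exp (((d - 1 : ℕ) : ℝ) * u)) *
              (1 / S ^ 2 * (A * Real.exp (-t))) := by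
            rw [hF]
            apply mul_le_mul hyp _ (by positivity) (by positivity)
            have h3 : (0:ℝ) ≤ 1 / S ^ 2 := by positivity
            exact mul_le_mul_of_nonneg_left hφb h3
        _ = (A * S ^ (d - 1) / S ^ 2) * Real.exp (((d - 1 : ℕ) : ℝ) * u + -t) := by
            rw [Real.exp_add]; ring
        _ ≤ (A * S ^ (d - 1) / S ^ 2) * Real.exp (b * S + -(b * y)) := by
            have hkey : ((d - 1 : ℕ) : ℝ) * u + -t ≤ b * S + -(b * y) := by
              have h1 : t = 2 * b * u := by rw [ht, hb]; ring
              have h2 : b * S + -(b * y) = -(b * u) := by rw [hu']; ring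
              have h3 : ((d - 1 : ℕ) : ℝ) * u ≤ b * u := by nlinarith
              linarith
            have h0 : (0:ℝ) ≤ A * S ^ (d - 1) / S ^ 2 := by positivity
            exact mul_le_mul_of_nonneg_left (Real.exp_le_exp.mpr hkey) h0
        _ = g y := by rw [hg, hc]; simp only [Real.exp_add]; ring
  have hI : ∫ y in Ioi S, Real.exp (-(b * y)) = b⁻¹ * Real.exp (-(b * S)) := by
    have := integral_comp_mul_left_Ioi (fun x => Real.exp (-x)) S hb0
    simpa [integral_exp_neg_Ioi, integral_exp_Iic, smul_eq_mul] using this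
  have hgval : ∫ y in Ioi S, g y = A * S ^ (d - 1) / S ^ 2 * b⁻¹ := by
    rw [hg, integral_const_mul, hI, hc, Real.exp_neg]
    have h1 : Real.exp (b * S) ≠ 0 := Real.exp_ne_zero _
    field_simp
  have hpow : S ^ (d + 1) = S ^ (d - 1) * S ^ 2 := by
    rw [← pow_add]; congr 1; omega
  have hfinal : A * S ^ (d - 1) / S ^ 2 * b⁻¹ = 2 * A / S ^ 4 := by
    rw [hb, hpow]
    have h1 : S ^ (d - 1) ≠ 0 := by positivity
    have h2 : S ≠ 0 := ne_of_gt hS0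
    field_simp
  exact hmono.trans ((hgval.trans hfinal).le)

theorem keybound (d : ℕ) (hd : 2 ≤ d) (C : ℝ) (φ : ℝ → ℝ) (hφmono : Monotone φ)
    (hφ0 : ∀ t ≤ (0 : ℝ), φ t = 0) (hφ1 : ∀ t ≥ (1 : ℝ), φ t = t + C)
    (S : ℝ) (hS : 2 ≤ S) :
    (∫ x in (ball (0 : EuclideanSpace ℝ (Fin d)) S)ᶜ,
      Real.exp (-(2 * Real.log S + φ (S ^ (d + 1) * (‖x‖ - S))))) ≤
      (d : ℝ) * (volume (ball (0 : EuclideanSpace ℝ (Fin d)) 1)).toReal *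
        (2 * Real.exp (-(min C (-1)))) / S ^ 2 := by
  haveI : Nonempty (Fin d) := ⟨⟨0, by omega⟩⟩
  have hS0 : (0:ℝ) < S := by linarith
  set F : ℝ → ℝ := fun r => Real.exp (-(2 * Real.log S + φ (S ^ (d + 1) * (r - S)))) with hF
  set cvol := (volume (ball (0 : EuclideanSpace ℝ (Fin d)) 1)).toReal with hcvol
  have hcvol0 : 0 ≤ cvol := ENNReal.toReal_nonneg
  have h1 : (∫ x in (ball (0 : EuclideanSpace ℝ (Fin d)) S)ᶜ, F ‖x‖)
      = ∫ x : EuclideanSpace ℝ (Fin d), (Ici S).indicator F ‖x‖ := by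
    rw [← integral_indicator measurableSet_ball.compl]
    congr 1
    funext x
    by_cases hx : S ≤ ‖x‖ <;>
      simp [Set.indicator_apply, mem_ball_zero_iff, not_lt, hx]
  have h2 : (∫ x : EuclideanSpace ℝ (Fin d), (Ici S).indicator F ‖x‖)
      = d • cvol • ∫ y in Ioi (0:ℝ), y ^ (d - 1) • (Ici S).indicator F y := by
    rw [integral_fun_norm_addHaar volume ((Ici S).indicator F), finrank_euclideanSpace_fin]
    rfl
  have h3 : (∫ y in Ioi (0:ℝ), y ^ (d - 1) • (Ici S).indicator F y)
      = ∫ y in Ioi S, y ^ (d - 1) * F y := by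
    have e1 : (fun y : ℝ => y ^ (d - 1) • (Ici S).indicator F y)
        = fun y : ℝ => (Ici S).indicator (fun y => y ^ (d - 1) * F y) y := by
      funext y
      by_cases hy : y ∈ Ici S <;>
        simp [Set.indicator_of_mem, Set.indicator_of_notMem, hy, smul_eq_mul]
    have hss : Ioi (0:ℝ) ∩ Ici S = Ici S :=
      Set.inter_eq_self_of_subset_right (fun y (hy : y ∈ Ici S) => lt_of_lt_of_le hS0 hy)
    rw [e1, setIntegral_indicator measurableSet_Ici, hss, integral_Ici_eq_integral_Ioi]
  have hbd := oneDbound d hd C φ hφmono hφ0 hφ1 S hS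
  have hS4 : 1 / S ^ 4 ≤ 1 / S ^ 2 :=
    one_div_le_one_div_of_le (by positivity) (by nlinarith [sq_nonneg (S * S - 1), sq_nonneg (S - 1)])
  calc (∫ x in (ball (0 : EuclideanSpace ℝ (Fin d)) S)ᶜ, F ‖x‖)
      = (d : ℝ) * cvol * ∫ y in Ioi S, y ^ (d - 1) * F y := by
        rw [h1, h2, h3, nsmul_eq_mul, smul_eq_mul]; ring
    _ ≤ (d : ℝ) * cvol * (2 * Real.exp (-(min C (-1))) / S ^ 4) := by
        apply mul_le_mul_of_nonneg_left hbd (by positivity)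
    _ ≤ (d : ℝ) * cvol * (2 * Real.exp (-(min C (-1)))) / S ^ 2 := by
        have hA0 : (0:ℝ) < 2 * Real.exp (-(min C (-1))) := by positivity
        rw [div_eq_mul_one_div ((d : ℝ) * cvol * (2 * Real.exp (-(min C (-1))))) (S^2),
          mul_assoc ((d:ℝ) * cvol)]
        apply mul_le_mul_of_nonneg_left _ (by positivity)
        rw [div_eq_mul_one_div]
        exact mul_le_mul_of_nonneg_left hS4 hA0.le

/-- Existence of penalisation functions: `x ↦ 2 log R + φ(R^{d+1}(|x|−R))` is `C²` away
from the origin, constant equal to `2 log R` on `B(0,R)`, and has summable exterior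
exponential mass. -/
theorem stmt13 (d : ℕ) (hd : 2 ≤ d) (C : ℝ)
    (ψ φ : ℝ → ℝ) (hψ : ContDiff ℝ (⊤ : ℕ∞) ψ) (hψmono : Antitone ψ)
    (hψ0 : ∀ t ≤ (0 : ℝ), ψ t = 1) (hψ1 : ∀ t ≥ (1 : ℝ), ψ t = 0)
    (hφ : ContDiff ℝ (⊤ : ℕ∞) φ) (hφmono : Monotone φ)
    (hφ0 : ∀ t ≤ (0 : ℝ), φ t = 0) (hφ1 : ∀ t ≥ (1 : ℝ), φ t = t + C) :
    (∀ R : ℕ, 1 ≤ R →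
      ContDiffOn ℝ 2 (fun x : EuclideanSpace ℝ (Fin d) =>
          2 * Real.log R + φ ((R : ℝ) ^ (d + 1) * (‖x‖ - R)))
        {(0 : EuclideanSpace ℝ (Fin d))}ᶜ ∧
      ∀ x ∈ ball (0 : EuclideanSpace ℝ (Fin d)) (R : ℝ),
        2 * Real.log R + φ ((R : ℝ) ^ (d + 1) * (‖x‖ - R)) = 2 * Real.log R) ∧
    Summable (fun R : ℕ =>
      ∫ x in (ball (0 : EuclideanSpace ℝ (Fin d)) ((R : ℝ) + 1))ᶜ,
        Real.exp (-(2 * Real.log ((R : ℝ) + 1) +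
          φ (((R : ℝ) + 1) ^ (d + 1) * (‖x‖ - ((R : ℝ) + 1)))))) := by
  constructor
  · intro R hR
    constructor
    · intro x hx
      exact (contDiffAt_const.add (((hφ.of_le (WithTop.coe_le_coe.mpr le_top)).contDiffAt).comp x
        (contDiffAt_const.mul ((contDiffAt_norm ℝ hx).sub contDiffAt_const)))).contDiffWithinAt
    · intro x hx
      rw [mem_ball_zero_iff] at hx
      have : (R:ℝ) ^ (d + 1) * (‖x‖ - R) ≤ 0 :=
        mul_nonpos_of_nonneg_of_nonpos (by positivity) (by linarith)
      rw [hφ0 _ this, add_zero]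
  · have h2 : Summable (fun n : ℕ => 1 / ((n:ℝ) + 1 + 1) ^ 2) := by
      have := (summable_nat_add_iff 2).mpr
        (Real.summable_one_div_nat_pow.mpr (by norm_num : 1 < 2))
      apply this.congr
      intro n
      push_cast
      ring_nf
    have hsum : Summable (fun n : ℕ =>
        (d : ℝ) * (volume (ball (0 : EuclideanSpace ℝ (Fin d)) 1)).toReal *
          (2 * Real.exp (-(min C (-1)))) / ((n:ℝ) + 1 + 1) ^ 2) := by
      have := h2.mul_left ((d : ℝ) * (volume (ball (0 : EuclideanSpace ℝ (Fin d)) 1)).toReal *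
        (2 * Real.exp (-(min C (-1)))))
      apply this.congr
      intro n
      rw [← div_eq_mul_one_div]
    rw [← summable_nat_add_iff 1]
    refine Summable.of_nonneg_of_le
      (fun n => integral_nonneg fun x => (Real.exp_pos _).le) (fun n => ?_) hsum
    simp only [Nat.cast_add, Nat.cast_one]
    exact keybound d hd C φ hφmono hφ0 hφ1 ((n:ℝ) + 1 + 1)
      (by have : (0:ℝ) ≤ (n:ℝ) := n.cast_nonneg; linarith)
end

section
/- Let x_1, x_2, x_3 ∈ ℝ^d (d ≥ 2) with pairwise distances |x_i − x_j| ≥ 2r̊, and let R = r̊ + ṙ with ṙ/r̊ ≤ (2/3)√3 − 1. Then B(x_1, R) ∩ B(x_2, R) ∩ B(x_3, R) = ∅. -/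
/-! If `y` lies in all three balls, the identity
`Σ_{i<j} ‖xᵢ - xⱼ‖² + ‖Σᵢ (xᵢ - y)‖² = 3 Σᵢ ‖xᵢ - y‖²` gives `12 r̊² < 9 R²`,
i.e. `√3 R > 2 r̊`, which the ratio condition excludes. -/

open Metric

section InnerProductSpace

variable {E : Type*} [NormedAddCommGroup E] [InnerProductSpace ℝ E]

theorem norm_sub_sq_add_norm_sub_sq_add_norm_sub_sq_add_norm_add_add_sq (a b c : E) :
    ‖a - b‖ ^ 2 + ‖a - c‖ ^ 2 + ‖b - c‖ ^ 2 + ‖a + b + c‖ ^ 2 =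
      3 * (‖a‖ ^ 2 + ‖b‖ ^ 2 + ‖c‖ ^ 2) := by
  rw [norm_sub_sq_real, norm_sub_sq_real, norm_sub_sq_real, norm_add_sq_real,
    norm_add_sq_real, inner_add_left]
  ring

theorem dist_sq_add_dist_sq_add_dist_sq_le (x₁ x₂ x₃ y : E) :
    dist x₁ x₂ ^ 2 + dist x₁ x₃ ^ 2 + dist x₂ x₃ ^ 2 ≤
      3 * (dist x₁ y ^ 2 + dist x₂ y ^ 2 + dist x₃ y ^ 2) := by
  have h := norm_sub_sq_add_norm_sub_sq_add_norm_sub_sq_add_norm_add_add_sq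
    (x₁ - y) (x₂ - y) (x₃ - y)
  simp only [sub_sub_sub_cancel_right, ← dist_eq_norm] at h
  linarith [sq_nonneg ‖x₁ - y + (x₂ - y) + (x₃ - y)‖]

/-- The threshold `√3 R ≤ 2r` is sharp: it is attained by an equilateral triangle of side
`2r`, whose circumradius is `2r/√3`. -/
theorem ball_inter_ball_inter_ball_eq_empty {x₁ x₂ x₃ : E} {r R : ℝ}
    (hR : Real.sqrt 3 * R ≤ 2 * r) (h12 : 2 * r ≤ dist x₁ x₂) (h13 : 2 * r ≤ dist x₁ x₃)
    (h23 : 2 * r ≤ dist x₂ x₃) :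
    ball x₁ R ∩ ball x₂ R ∩ ball x₃ R = ∅ := by
  refine Set.eq_empty_of_forall_notMem fun y ⟨⟨hy₁, hy₂⟩, hy₃⟩ => ?_
  rw [mem_ball'] at hy₁ hy₂ hy₃
  have hR₀ : 0 < R := dist_nonneg.trans_lt hy₁
  have hr₀ : 0 < r := by nlinarith [Real.sqrt_pos.2 (three_pos : (0 : ℝ) < 3)]
  have hR_sq : 3 * R ^ 2 ≤ 4 * r ^ 2 := by
    have := pow_le_pow_left₀ (by positivity) hR 2
    rw [mul_pow, mul_pow, Real.sq_sqrt three_pos.le] at this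
    linarith
  have key := dist_sq_add_dist_sq_add_dist_sq_le x₁ x₂ x₃ y
  linarith [pow_lt_pow_left₀ hy₁ dist_nonneg two_ne_zero,
    pow_lt_pow_left₀ hy₂ dist_nonneg two_ne_zero, pow_lt_pow_left₀ hy₃ dist_nonneg two_ne_zero,
    pow_le_pow_left₀ (by positivity) h12 2, pow_le_pow_left₀ (by positivity) h13 2,
    pow_le_pow_left₀ (by positivity) h23 2]

end InnerProductSpace

theorem sqrt_three_mul_add_le_of_div_le {r rp : ℝ} (hr : 0 < r)
    (hratio : rp / r ≤ 2 / 3 * Real.sqrt 3 - 1) : Real.sqrt 3 * (r + rp) ≤ 2 * r := by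
  rw [div_le_iff₀ hr] at hratio
  nlinarith [Real.sq_sqrt (three_pos.le : (0 : ℝ) ≤ 3), Real.sqrt_nonneg 3]

theorem stmt18_general (d : ℕ) (r rp : ℝ) (hr : 0 < r)
    (hratio : rp / r ≤ 2 / 3 * Real.sqrt 3 - 1)
    (x₁ x₂ x₃ : EuclideanSpace ℝ (Fin d))
    (h12 : 2 * r ≤ dist x₁ x₂) (h13 : 2 * r ≤ dist x₁ x₃) (h23 : 2 * r ≤ dist x₂ x₃) :
    ball x₁ (r + rp) ∩ ball x₂ (r + rp) ∩ ball x₃ (r + rp) = ∅ :=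
  ball_inter_ball_inter_ball_eq_empty (sqrt_three_mul_add_le_of_div_le hr hratio) h12 h13 h23

/-- Depletion shells of three mutually non-overlapping hard spheres have no common
point: if the pairwise distances are at least `2r̊` and `rp/r̊ ≤ (2/3)√3 − 1`, then the
balls of radius `R = r̊ + rp` around the three centres have empty intersection. -/
theorem stmt18 (d : ℕ) (hd : 2 ≤ d) (r rp : ℝ) (hr : 0 < r) (hrp : 0 < rp)
    (hratio : rp / r ≤ 2 / 3 * Real.sqrt 3 - 1)
    (x₁ x₂ x₃ : EuclideanSpace ℝ (Fin d))
    (h12 : 2 * r ≤ dist x₁ x₂) (h13 : 2 * r ≤ dist x₁ x₃) (h23 : 2 * r ≤ dist x₂ x₃) :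
    ball x₁ (r + rp) ∩ ball x₂ (r + rp) ∩ ball x₃ (r + rp) = ∅ :=
  stmt18_general d r rp hr hratio x₁ x₂ x₃ h12 h13 h23
end
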